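/- Let Ξ ∈ C(𝕋ⁿ), P ∈ ℝⁿ and E ∈ ℝ. Suppose φ : 𝕋ⁿ → ℝ is Lipschitz and satisfies (1/2)|∇φ(x) + P|² + Ξ(x) ≤ E for Lebesgue-almost every x ∈ 𝕋ⁿ (with ∇φ the a.e.-defined gradient). Then Ĥ_Ξ(P) ≤ E. -/

import Mathlib

open MeasureTheory Filter Topology

noncomputable section

instance : Fact ((0:ℝ) < 1) := ⟨one_pos⟩

/-- The flat `n`-torus `𝕋ⁿ = ℝⁿ/ℤⁿ`, realized as a product of circles. -/
abbrev Torus (n : ℕ) := Fin n → AddCircle (1 : ℝ)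

/-- Projection `ℝⁿ → 𝕋ⁿ`. -/
def Tproj (n : ℕ) (x : Fin n → ℝ) : Torus n := fun i => (x i : AddCircle (1:ℝ))

/-- A representative in `[0,1)ⁿ` of a point of the torus. -/
def Trep (n : ℕ) (y : Torus n) : Fin n → ℝ := fun i => ((AddCircle.equivIco (1:ℝ) 0) (y i)).1

/-- Euclidean dot product on `ℝⁿ`. -/
def vdot {n : ℕ} (a b : Fin n → ℝ) : ℝ := ∑ i, a i * b i

/-- Euclidean squared norm on `ℝⁿ`. -/
def vnsq {n : ℕ} (a : Fin n → ℝ) : ℝ := ∑ i, (a i)^2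

/-- The gradient (as a vector in `ℝⁿ`) of `φ : ℝⁿ → ℝ`. -/
def vgrad {n : ℕ} (φ : (Fin n → ℝ) → ℝ) (x : Fin n → ℝ) : Fin n → ℝ :=
  fun i => fderiv ℝ φ x (Pi.single i 1)

/-- `ℤⁿ`-periodicity of a function on `ℝⁿ`. -/
def ZPeriodic {n : ℕ} (f : (Fin n → ℝ) → ℝ) : Prop :=
  ∀ (x : Fin n → ℝ) (z : Fin n → ℤ), f (x + fun i => (z i : ℝ)) = f x

/-- `C¹` functions on the torus, identified with `ℤⁿ`-periodic `C¹` functions on `ℝⁿ`. -/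
def IsC1Torus {n : ℕ} (φ : (Fin n → ℝ) → ℝ) : Prop := ContDiff ℝ 1 φ ∧ ZPeriodic φ

/-- The Dirichlet functional `F(μ,P) = (1/2)·inf_{φ ∈ C¹(𝕋ⁿ)} ∫ |∇φ+P|² dμ`. -/
def Fdir {n : ℕ} (μ : Measure (Torus n)) (P : Fin n → ℝ) : ℝ :=
  (1/2) * sInf { r : ℝ | ∃ φ, IsC1Torus φ ∧
    r = ∫ y, vnsq (vgrad φ (Trep n y) + P) ∂μ }

/-- The Legendre transform `F*(μ,J) = sup_P [P·J − F(μ,P)]` (possibly `+∞`). -/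
def FdirStar {n : ℕ} (μ : Measure (Torus n)) (J : Fin n → ℝ) : EReal :=
  ⨆ P : Fin n → ℝ, ((vdot P J - Fdir μ P : ℝ) : EReal)

/-- The set `Λ`: probability measures on `𝕋ⁿ×ℝⁿ` with finite second `p`-moment
which annihilate gradients of `C¹` test functions. -/
def MemLambda {n : ℕ} (ν : Measure (Torus n × (Fin n → ℝ))) : Prop :=
  IsProbabilityMeasure ν ∧ Integrable (fun q => vnsq q.2) ν ∧
    ∀ θ, IsC1Torus θ → ∫ q, vdot q.2 (vgrad θ (Trep n q.1)) ∂ν = 0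

/-- `Λ_μ`: members of `Λ` whose `𝕋ⁿ`-marginal is `μ`. -/
def MemLambdaMu {n : ℕ} (μ : Measure (Torus n)) (ν : Measure (Torus n × (Fin n → ℝ))) : Prop :=
  MemLambda ν ∧ ν.map Prod.fst = μ

/-- `Λ_μ^J`: members of `Λ_μ` with mean momentum `J`. -/
def MemLambdaMuJ {n : ℕ} (μ : Measure (Torus n)) (J : Fin n → ℝ)
    (ν : Measure (Torus n × (Fin n → ℝ))) : Prop :=
  MemLambdaMu μ ν ∧ (fun i => ∫ q, q.2 i ∂ν) = J

/-- The action `∫ (|p|²/2 − p·P) dν`. -/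
def actionInt {n : ℕ} (P : Fin n → ℝ) (ν : Measure (Torus n × (Fin n → ℝ))) : ℝ :=
  ∫ q, (vnsq q.2 / 2 - vdot q.2 P) ∂ν

/-- `ν` is a weak solution of `F(μ,P)`. -/
def IsWeakSolution {n : ℕ} (μ : Measure (Torus n)) (P : Fin n → ℝ)
    (ν : Measure (Torus n × (Fin n → ℝ))) : Prop :=
  MemLambdaMu μ ν ∧ ∀ ξ, MemLambdaMu μ ξ → actionInt P ν ≤ actionInt P ξ

/-- `J` belongs to the subgradient of `F(μ,·)` at `P`. -/
def InSubgradF {n : ℕ} (μ : Measure (Torus n)) (P J : Fin n → ℝ) : Prop :=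
  ∀ P' : Fin n → ℝ, Fdir μ P' ≥ Fdir μ P + vdot J (P' - P)

/-- weak-* convergence of a sequence of measures on the torus. -/
def WeakStarTendsto {n : ℕ} (μs : ℕ → Measure (Torus n)) (μ : Measure (Torus n)) : Prop :=
  ∀ f : C(Torus n, ℝ), Tendsto (fun j => ∫ x, f x ∂(μs j)) atTop (𝓝 (∫ x, f x ∂μ))

/-- weak-* convergence of measures on `𝕋ⁿ×ℝⁿ` (tested on bounded continuous functions). -/
def WeakStarTendstoProd {n : ℕ} (νs : ℕ → Measure (Torus n × (Fin n → ℝ)))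
    (ν : Measure (Torus n × (Fin n → ℝ))) : Prop :=
  ∀ f : BoundedContinuousFunction (Torus n × (Fin n → ℝ)) ℝ,
    Tendsto (fun j => ∫ q, f q ∂(νs j)) atTop (𝓝 (∫ q, f q ∂ν))

/-- The measure `ρ(x)dx` on the torus associated with a periodic density `ρ` on `ℝⁿ`. -/
def densMeasure (n : ℕ) (ρ : (Fin n → ℝ) → ℝ) : Measure (Torus n) :=
  (volume : Measure (Torus n)).withDensity (fun y => ENNReal.ofReal (ρ (Trep n y)))

/-- The functional `E(μ,J,φ) = (1/2)[|J − ∫∇φ dμ|² − ∫|∇φ|² dμ]`. -/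
def Efun {n : ℕ} (μ : Measure (Torus n)) (J : Fin n → ℝ) (φ : (Fin n → ℝ) → ℝ) : ℝ :=
  (1/2) * (vnsq (J - fun i => ∫ y, vgrad φ (Trep n y) i ∂μ)
    - ∫ y, vnsq (vgrad φ (Trep n y)) ∂μ)

/-- The effective Hamiltonian `Ĥ_Ξ(P) = sup_μ [∫Ξ dμ + F(μ,P)]`. -/
def HXi {n : ℕ} (Ξ : C(Torus n, ℝ)) (P : Fin n → ℝ) : ℝ :=
  sSup { r : ℝ | ∃ μ : Measure (Torus n), IsProbabilityMeasure μ ∧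
    r = (∫ y, Ξ y ∂μ) + Fdir μ P }

/-- `Ĥ*_Ξ(J) = sup_μ [∫Ξ dμ − F*(μ,J)]`. -/
def HXiStar {n : ℕ} (Ξ : C(Torus n, ℝ)) (J : Fin n → ℝ) : EReal :=
  sSup { r : EReal | ∃ μ : Measure (Torus n), IsProbabilityMeasure μ ∧
    r = ((∫ y, Ξ y ∂μ : ℝ) : EReal) - FdirStar μ J }

/-- `J` belongs to the subgradient of `Ĥ_Ξ` at `P`. -/
def InSubgradH {n : ℕ} (Ξ : C(Torus n, ℝ)) (P J : Fin n → ℝ) : Prop :=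
  ∀ P' : Fin n → ℝ, HXi Ξ P' ≥ HXi Ξ P + vdot J (P' - P)

/-- An orbit of probability measures on `[0,T]`, continuous for the weak topology. -/
def IsOrbit {n : ℕ} (T : ℝ) (μh : ℝ → Measure (Torus n)) : Prop :=
  (∀ t, IsProbabilityMeasure (μh t)) ∧
  ∀ f : C(Torus n, ℝ), ContinuousOn (fun t => ∫ x, f x ∂(μh t)) (Set.Icc 0 T)

/-- A `C¹` space-time test function on `𝕋ⁿ×(0,T)`, compactly supported in time. -/
def IsTimeTest {n : ℕ} (T : ℝ) (φ : (Fin n → ℝ) → ℝ → ℝ) : Prop :=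
  ContDiff ℝ 1 (fun q : (Fin n → ℝ) × ℝ => φ q.1 q.2) ∧
  (∀ t : ℝ, ZPeriodic (fun x => φ x t)) ∧
  ∃ a b : ℝ, 0 < a ∧ a ≤ b ∧ b < T ∧ ∀ (x : Fin n → ℝ) (t : ℝ), t ∉ Set.Icc a b → φ x t = 0

/-- The time-dependent Dirichlet functional `F(μ̂,P,T)`. -/
def FdirT {n : ℕ} (T : ℝ) (μh : ℝ → Measure (Torus n)) (P : Fin n → ℝ) : ℝ :=
  (1/T) * sInf { r : ℝ | ∃ φ, IsTimeTest T φ ∧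
    r = ∫ t in (0:ℝ)..T, (∫ y, (deriv (φ (Trep n y)) t
        + (1/2) * vnsq (vgrad (fun x => φ x t) (Trep n y) + P)) ∂(μh t)) }

/-- `Λ̂_{T,μ̂}`: lifted orbits over `μ̂`. -/
def IsLiftOrbit {n : ℕ} (T : ℝ) (μh : ℝ → Measure (Torus n))
    (νh : ℝ → Measure (Torus n × (Fin n → ℝ))) : Prop :=
  (∀ t, IsProbabilityMeasure (νh t)) ∧
  (∀ t ∈ Set.Icc (0:ℝ) T, Integrable (fun q => vnsq q.2) (νh t)) ∧
  IntervalIntegrable (fun t => ∫ q, vnsq q.2 ∂(νh t)) volume 0 T ∧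
  (∀ θ : (Fin n → ℝ) → ℝ → ℝ, IsTimeTest T θ →
    ∫ t in (0:ℝ)..T, (∫ q, (deriv (θ (Trep n q.1)) t
      + vdot q.2 (vgrad (fun x => θ x t) (Trep n q.1))) ∂(νh t)) = 0) ∧
  (∀ t, (νh t).map Prod.fst = μh t)

/-- The time-averaged action `(1/T)∫₀ᵀ∫ (|p|²/2 − p·P) dν_(t) dt` of a lifted orbit. -/
def actionT {n : ℕ} (T : ℝ) (P : Fin n → ℝ)
    (νh : ℝ → Measure (Torus n × (Fin n → ℝ))) : ℝ :=
  (1/T) * ∫ t in (0:ℝ)..T, (∫ q, (vnsq q.2 / 2 - vdot q.2 P) ∂(νh t))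

/-- Weak solution of `F(μ̂,P,T)`. -/
def IsWeakSolutionT {n : ℕ} (T : ℝ) (μh : ℝ → Measure (Torus n)) (P : Fin n → ℝ)
    (νh : ℝ → Measure (Torus n × (Fin n → ℝ))) : Prop :=
  IsLiftOrbit T μh νh ∧ ∀ ξh, IsLiftOrbit T μh ξh → actionT T P νh ≤ actionT T P ξh

/-- Orbits in `M̄_T(μ₁,μ₂)`, i.e. from `μ₁` to `μ₂`. -/
def IsOrbitBetween {n : ℕ} (T : ℝ) (μ1 μ2 : Measure (Torus n))
    (μh : ℝ → Measure (Torus n)) : Prop :=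
  IsOrbit T μh ∧ μh 0 = μ1 ∧ μh T = μ2

/-- `H_{Ξ,T}(μ₁,μ₂,P)`. -/
def HXiT {n : ℕ} (Ξ : C(Torus n, ℝ)) (T : ℝ) (μ1 μ2 : Measure (Torus n))
    (P : Fin n → ℝ) : ℝ :=
  sSup { r : ℝ | ∃ μh, IsOrbitBetween T μ1 μ2 μh ∧
    r = (1/T) * (∫ t in (0:ℝ)..T, (∫ x, Ξ x ∂(μh t))) + FdirT T μh P }

/-- The minimal action `A^Ξ_P(y,x,T)` over absolutely continuous paths from `y` to `x`
(paths are encoded by a starting point and an integrable velocity field). -/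
def pathAction {n : ℕ} (Ξ : C(Torus n, ℝ)) (P : Fin n → ℝ) (T : ℝ) (y x : Torus n) : ℝ :=
  sInf { r : ℝ | ∃ (γ0 : Fin n → ℝ) (v : ℝ → Fin n → ℝ),
    (∀ i, IntervalIntegrable (fun s => v s i) volume 0 T) ∧
    IntervalIntegrable (fun s => vnsq (v s)) volume 0 T ∧
    Tproj n γ0 = y ∧ Tproj n (γ0 + fun i => ∫ s in (0:ℝ)..T, v s i) = x ∧
    r = (1/T) * ∫ s in (0:ℝ)..T,
      (vnsq (v s - P) / 2 - Ξ (Tproj n (γ0 + fun i => ∫ u in (0:ℝ)..s, v u i))) }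

/-- The optimal transportation cost `D^T_P(μ₁,μ₂,Ξ)`. -/
def Dcost {n : ℕ} (Ξ : C(Torus n, ℝ)) (P : Fin n → ℝ) (T : ℝ)
    (μ1 μ2 : Measure (Torus n)) : ℝ :=
  sInf { r : ℝ | ∃ σ : Measure (Torus n × Torus n), IsProbabilityMeasure σ ∧
    σ.map Prod.fst = μ1 ∧ σ.map Prod.snd = μ2 ∧
    r = ∫ q, pathAction Ξ P T q.1 q.2 ∂σ }

/-- The squared torus distance `‖a − b − w‖²_{𝕋ⁿ}`. -/
def tDistSq {n : ℕ} (a b : Torus n) (w : Fin n → ℝ) : ℝ :=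
  ∑ k, ‖a k - b k - ((w k : ℝ) : AddCircle (1:ℝ))‖^2

/-- The empirical measure `j⁻¹ Σ δ_{x i}`. -/
def empMeasure {n : ℕ} {j : ℕ} (x : Fin j → Torus n) : Measure (Torus n) :=
  (j : ENNReal)⁻¹ • ∑ i, Measure.dirac (x i)

/-- The combinatorial cost `D^T_P(j,Ξ)`. -/
def DcostJ (n : ℕ) (Ξ : C(Torus n, ℝ)) (P : Fin n → ℝ) (T : ℝ) (j : ℕ) : ℝ :=
  sInf { r : ℝ | ∃ (x : Fin j → Torus n) (σ : Equiv.Perm (Fin j)),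
    r = (j:ℝ)⁻¹ * ∑ i, pathAction Ξ P T (x i) (x (σ i)) }


section AuxSubsolution

open Convolution Metric

lemma norm_addCircle_coe_le (x : ℝ) : ‖(x : AddCircle (1:ℝ))‖ ≤ |x| := by
  rw [AddCircle.norm_eq]
  rcases le_or_gt (1/2) |x| with h | h
  · calc |x - round ((1:ℝ)⁻¹ * x) * 1| ≤ 1/2 := by simpa using abs_sub_round ((1:ℝ)⁻¹*x)
      _ ≤ |x| := h
  · have : round x = 0 := by
      rw [round_eq_zero_iff]
      constructor <;> [linarith [neg_abs_le x]; linarith [le_abs_self x]]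
    simp [this]

lemma lipschitz_Tproj (n : ℕ) : LipschitzWith 1 (Tproj n) := by
  apply LipschitzWith.of_dist_le_mul
  intro x x'
  rw [NNReal.coe_one, one_mul]
  apply dist_pi_le_iff dist_nonneg |>.2
  intro i
  calc dist ((x i : AddCircle (1:ℝ))) ((x' i : AddCircle (1:ℝ)))
      = ‖((x i - x' i : ℝ) : AddCircle (1:ℝ))‖ := by
        rw [dist_eq_norm]; norm_cast
    _ ≤ |x i - x' i| := norm_addCircle_coe_le _
    _ = dist (x i) (x' i) := (Real.dist_eq _ _).symm
    _ ≤ dist x x' := dist_le_pi_dist x x' i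

lemma xi_uniform (n : ℕ) (Ξ : C(Torus n, ℝ)) {ε : ℝ} (hε : 0 < ε) :
    ∃ δ > 0, ∀ x y : Fin n → ℝ, ‖y‖ < δ →
      |Ξ (Tproj n (x - y)) - Ξ (Tproj n x)| ≤ ε := by
  have hXc : UniformContinuous (fun z : Fin n → ℝ => Ξ (Tproj n z)) :=
    (CompactSpace.uniformContinuous_of_continuous Ξ.continuous).comp
      (lipschitz_Tproj n).uniformContinuous
  obtain ⟨δ, hδ, h⟩ := Metric.uniformContinuous_iff.1 hXc ε hε
  refine ⟨δ, hδ, fun x y hy => ?_⟩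
  have : dist (x - y) x < δ := by
    rw [dist_eq_norm, sub_sub_cancel_left, norm_neg]; exact hy
  exact (le_of_lt (by simpa [Real.dist_eq] using h this))

lemma weighted_cs {n : ℕ} (ρ g : (Fin n → ℝ) → ℝ) (hρ : ∀ y, 0 ≤ ρ y)
    (hρi : Integrable ρ (volume : Measure (Fin n → ℝ))) (hρ1 : ∫ y, ρ y = 1)
    (hg : AEStronglyMeasurable g (volume : Measure (Fin n → ℝ)))
    (C : ℝ) (hgb : ∀ y, |g y| ≤ C) :
    (∫ y, ρ y * g y)^2 ≤ ∫ y, ρ y * (g y)^2 := by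
  have h1 : Integrable (fun y => ρ y * g y) volume := by
    have := hρi.bdd_mul (f := g) hg (Eventually.of_forall (by simpa [Real.norm_eq_abs] using hgb))
    simpa [mul_comm] using this
  have h2 : Integrable (fun y => ρ y * (g y)^2) volume := by
    have hb : ∀ y, ‖(g y)^2‖ ≤ C^2 := by
      intro y
      rw [Real.norm_eq_abs, abs_pow]
      exact pow_le_pow_left₀ (abs_nonneg _) (hgb y) 2
    have := hρi.bdd_mul (f := fun y => (g y)^2) (hg.pow 2) (Eventually.of_forall hb)
    simpa [mul_comm] using this
  set m := ∫ y, ρ y * g y with hm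
  have hnn : 0 ≤ ∫ y, ρ y * (g y - m)^2 :=
    integral_nonneg fun y => mul_nonneg (hρ y) (sq_nonneg _)
  have hexp : (fun y => ρ y * (g y - m)^2)
      = fun y => (ρ y * (g y)^2 - (2*m) * (ρ y * g y)) + m^2 * ρ y := by
    funext y; ring
  rw [hexp] at hnn
  rw [integral_add (by exact (h2.sub (h1.const_mul (2*m)))) (hρi.const_mul (m^2)),
    integral_sub h2 (h1.const_mul (2*m)), integral_const_mul, integral_const_mul, hρ1] at hnn
  simp only [← hm] at hnn ⊢
  nlinarith [hnn]

lemma Tproj_Trep (n : ℕ) (y : Torus n) : Tproj n (Trep n y) = y :=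
  funext fun i => (AddCircle.equivIco 1 0).symm_apply_apply (y i)

lemma measurable_Trep (n : ℕ) : Measurable (Trep n) :=
  measurable_pi_lambda _ fun i => measurable_subtype_coe.comp
    ((AddCircle.measurableEquivIco (T := (1:ℝ)) 0).measurable.comp (measurable_pi_apply i))

lemma lineDeriv_conv {n : ℕ} (φ : (Fin n → ℝ) → ℝ) (K : NNReal) (hφ : LipschitzWith K φ)
    (f : ContDiffBump (0 : Fin n → ℝ)) (x v : Fin n → ℝ) :
    Integrable (fun y => f.normed volume y * fderiv ℝ φ (x - y) v) ∧
    HasDerivAt (fun t : ℝ => ∫ y, f.normed volume y * φ (x + t • v - y))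
      (∫ y, f.normed volume y * fderiv ℝ φ (x - y) v) 0 := by
  have hdiff : ∀ᵐ y ∂(volume : Measure (Fin n → ℝ)), DifferentiableAt ℝ φ (x - y) :=
    (Measure.measurePreserving_sub_left (volume : Measure (Fin n → ℝ))
      x).quasiMeasurePreserving.ae hφ.ae_differentiableAt
  set ρ := f.normed volume with hρ
  have hρc : Continuous ρ := f.continuous_normed
  apply hasDerivAt_integral_of_dominated_loc_of_lip (s := Metric.ball 0 1) (Metric.ball_mem_nhds _ one_pos)
      (bound := fun y => ρ y * (K * ‖v‖))
  · exact Eventually.of_forall fun t =>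
      (hρc.mul (hφ.continuous.comp (by continuity))).aestronglyMeasurable
  · apply Continuous.integrable_of_hasCompactSupport
    · exact hρc.mul (hφ.continuous.comp (by continuity))
    · exact f.hasCompactSupport_normed.mul_right
  · exact (hρc.aestronglyMeasurable.mul
      (((measurable_fderiv_apply_const ℝ φ v).comp
        (measurable_const.sub measurable_id)).aestronglyMeasurable))
  · refine Eventually.of_forall fun y => ?_
    apply LipschitzOnWith.of_dist_le_mul
    intro t _ s _
    have h1 : dist (ρ y * φ (x + t • v - y)) (ρ y * φ (x + s • v - y))
        = |ρ y| * dist (φ (x + t • v - y)) (φ (x + s • v - y)) := by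
      rw [Real.dist_eq, Real.dist_eq, ← abs_mul, mul_sub]
    rw [h1]
    have h2 : dist (φ (x + t • v - y)) (φ (x + s • v - y))
        ≤ K * dist (x + t • v - y) (x + s • v - y) := hφ.dist_le_mul _ _
    have h3 : dist (x + t • v - y) (x + s • v - y) = dist t s * ‖v‖ := by
      rw [dist_eq_norm, dist_eq_norm,
        show x + t • v - y - (x + s • v - y) = (t - s) • v by module, norm_smul]
    have h4 : (0:ℝ) ≤ ρ y := f.nonneg_normed y
    calc |ρ y| * dist (φ (x + t • v - y)) (φ (x + s • v - y))
        ≤ |ρ y| * (K * (dist t s * ‖v‖)) := by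
          apply mul_le_mul_of_nonneg_left _ (abs_nonneg _)
          rw [h3] at h2; exact h2
      _ = ↑(Real.nnabs (ρ y * (K * ‖v‖))) * dist t s := by
          simp only [Real.coe_nnabs, abs_mul, abs_of_nonneg h4,
            abs_of_nonneg (mul_nonneg K.coe_nonneg (norm_nonneg v)),
            abs_of_nonneg K.coe_nonneg, abs_norm]
          ring
  · exact f.integrable_normed.mul_const _
  · filter_upwards [hdiff] with y hy
    have hline : HasDerivAt (fun t : ℝ => x + t • v - y) v 0 := by
      simpa using (((hasDerivAt_id (0:ℝ)).smul_const v).const_add x).sub_const y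
    have h0 : x + (0:ℝ) • v - y = x - y := by simp
    have := (h0 ▸ hy.hasFDerivAt).comp_hasDerivAt 0 hline
    simpa using this.const_mul (ρ y)

lemma conv_contDiff {n : ℕ} (φ : (Fin n → ℝ) → ℝ) (K : NNReal) (hφ : LipschitzWith K φ)
    (f : ContDiffBump (0 : Fin n → ℝ)) :
    ContDiff ℝ 1 ((f.normed volume) ⋆[ContinuousLinearMap.lsmul ℝ ℝ] φ) :=
  HasCompactSupport.contDiff_convolution_left _ f.hasCompactSupport_normed
    (f.contDiff_normed (n := 1)) (hφ.continuous.locallyIntegrable)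

lemma fderiv_conv_eq {n : ℕ} (φ : (Fin n → ℝ) → ℝ) (K : NNReal) (hφ : LipschitzWith K φ)
    (f : ContDiffBump (0 : Fin n → ℝ)) (x v : Fin n → ℝ) :
    fderiv ℝ ((f.normed volume) ⋆[ContinuousLinearMap.lsmul ℝ ℝ] φ) x v
      = ∫ y, f.normed volume y * fderiv ℝ φ (x - y) v := by
  obtain ⟨hint, hD⟩ := lineDeriv_conv φ K hφ f x v
  set ψ := (f.normed volume) ⋆[ContinuousLinearMap.lsmul ℝ ℝ] φ with hψdef
  have hψ : ContDiff ℝ 1 ψ := conv_contDiff φ K hφ f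
  have hline : HasDerivAt (fun t : ℝ => ψ (x + t • v)) (fderiv ℝ ψ x v) 0 := by
    have h1 : HasDerivAt (fun t : ℝ => x + t • v) v 0 := by
      simpa using ((hasDerivAt_id (0:ℝ)).smul_const v).const_add x
    have h2 := ((hψ.differentiable one_ne_zero) (x + (0:ℝ) • v)).hasFDerivAt
    rw [zero_smul, add_zero] at h2
    exact h2.comp_hasDerivAt_of_eq 0 h1 (by simp)
  have heq : (fun t : ℝ => ψ (x + t • v))
      = fun t : ℝ => ∫ y, f.normed volume y * φ (x + t • v - y) := by
    funext t; simp [hψdef, convolution_def]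
  rw [heq] at hline
  exact hline.unique hD

end AuxSubsolution


section AuxSubsolution2

open Convolution Metric

lemma conv_periodic {n : ℕ} (φ : (Fin n → ℝ) → ℝ) (hper : ZPeriodic φ)
    (f : ContDiffBump (0 : Fin n → ℝ)) :
    ZPeriodic ((f.normed volume) ⋆[ContinuousLinearMap.lsmul ℝ ℝ] φ) := by
  intro x z
  simp only [convolution_def, ContinuousLinearMap.lsmul_apply, smul_eq_mul]
  congr 1
  funext y
  congr 1
  rw [add_sub_right_comm]
  exact hper (x - y) z

lemma star_bound {n : ℕ} (Ξ : C(Torus n, ℝ)) (P : Fin n → ℝ) (E : ℝ)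
    (φ : (Fin n → ℝ) → ℝ) (K : NNReal) (hφ : LipschitzWith K φ)
    (hae : ∀ᵐ x ∂(volume : Measure (Fin n → ℝ)),
      (1/2) * vnsq (vgrad φ x + P) + Ξ (Tproj n x) ≤ E)
    (f : ContDiffBump (0 : Fin n → ℝ)) (ε : ℝ)
    (hUC : ∀ x y : Fin n → ℝ, ‖y‖ < f.rOut → |Ξ (Tproj n (x - y)) - Ξ (Tproj n x)| ≤ ε)
    (x : Fin n → ℝ) :
    (1/2) * vnsq (vgrad ((f.normed volume) ⋆[ContinuousLinearMap.lsmul ℝ ℝ] φ) x + P)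
      + Ξ (Tproj n x) ≤ E + ε := by
  set ρ := f.normed volume with hρdef
  set ψ := (f.normed volume) ⋆[ContinuousLinearMap.lsmul ℝ ℝ] φ with hψdef
  have hρ0 : ∀ y, 0 ≤ ρ y := fun y => f.nonneg_normed y
  have hρi : Integrable ρ (volume : Measure (Fin n → ℝ)) := f.integrable_normed
  have hρ1 : ∫ y, ρ y = 1 := f.integral_normed
  set G : (Fin n → ℝ) → (Fin n → ℝ) := fun y => vgrad φ (x - y) + P with hG
  have hGmeas : ∀ i, Measurable (fun y => G y i) := by
    intro i
    have : (fun y => G y i)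
        = fun y => fderiv ℝ φ (x - y) (Pi.single i 1) + P i := rfl
    rw [this]
    exact ((measurable_fderiv_apply_const ℝ φ _).comp
      (measurable_const.sub measurable_id)).add_const _
  have hGb : ∀ i y, |G y i| ≤ (K : ℝ) * ‖(Pi.single i 1 : Fin n → ℝ)‖ + |P i| := by
    intro i y
    have h1 : |fderiv ℝ φ (x - y) (Pi.single i 1)|
        ≤ (K : ℝ) * ‖(Pi.single i 1 : Fin n → ℝ)‖ := by
      calc |fderiv ℝ φ (x - y) (Pi.single i 1)|
          ≤ ‖fderiv ℝ φ (x - y)‖ * ‖(Pi.single i 1 : Fin n → ℝ)‖ :=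
            (fderiv ℝ φ (x - y)).le_opNorm _
        _ ≤ (K : ℝ) * ‖(Pi.single i 1 : Fin n → ℝ)‖ := by
            gcongr; exact norm_fderiv_le_of_lipschitz ℝ hφ
    calc |G y i| ≤ |fderiv ℝ φ (x - y) (Pi.single i 1)| + |P i| := abs_add_le _ _
      _ ≤ (K : ℝ) * ‖(Pi.single i 1 : Fin n → ℝ)‖ + |P i| := by linarith
  have key_i : ∀ i, (vgrad ψ x + P) i = ∫ y, ρ y * G y i := by
    intro i
    have h1 : vgrad ψ x i = ∫ y, ρ y * fderiv ℝ φ (x - y) (Pi.single i 1) :=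
      fderiv_conv_eq φ K hφ f x (Pi.single i 1)
    have hint := (lineDeriv_conv φ K hφ f x (Pi.single i 1)).1
    show vgrad ψ x i + P i = _
    rw [h1, show (fun y => ρ y * G y i)
      = fun y => ρ y * fderiv ℝ φ (x - y) (Pi.single i 1) + P i * ρ y from
        funext fun y => by
          have hy : G y i = fderiv ℝ φ (x - y) (Pi.single i 1) + P i := rfl
          rw [hy]; ring,
      integral_add hint (hρi.const_mul _), integral_const_mul, hρ1, mul_one]
  have hInt2 : ∀ i, Integrable (fun y => ρ y * (G y i)^2) (volume : Measure (Fin n → ℝ)) := by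
    intro i
    have hb : ∀ y, ‖(G y i)^2‖ ≤ ((K : ℝ) * ‖(Pi.single i 1 : Fin n → ℝ)‖ + |P i|)^2 := by
      intro y
      rw [Real.norm_eq_abs, abs_pow]
      exact pow_le_pow_left₀ (abs_nonneg _) (hGb i y) 2
    have := hρi.bdd_mul (f := fun y => (G y i)^2)
      (((hGmeas i).pow_const 2).aestronglyMeasurable) (Eventually.of_forall hb)
    simpa [mul_comm] using this
  have hsum : vnsq (vgrad ψ x + P) ≤ ∫ y, ρ y * vnsq (G y) := by
    have hcs : ∀ i, ((vgrad ψ x + P) i)^2 ≤ ∫ y, ρ y * (G y i)^2 := by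
      intro i
      rw [key_i i]
      exact weighted_cs ρ (fun y => G y i) hρ0 hρi hρ1
        (hGmeas i).aestronglyMeasurable _ (hGb i)
    calc vnsq (vgrad ψ x + P) = ∑ i, ((vgrad ψ x + P) i)^2 := rfl
      _ ≤ ∑ i, ∫ y, ρ y * (G y i)^2 := Finset.sum_le_sum fun i _ => hcs i
      _ = ∫ y, ∑ i, ρ y * (G y i)^2 := (integral_finset_sum _ fun i _ => hInt2 i).symm
      _ = ∫ y, ρ y * vnsq (G y) := by
          congr 1; funext y; rw [show vnsq (G y) = ∑ i, (G y i)^2 from rfl, Finset.mul_sum]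
  have haeT : ∀ᵐ y ∂(volume : Measure (Fin n → ℝ)),
      (1/2) * vnsq (G y) + Ξ (Tproj n (x - y)) ≤ E :=
    (Measure.measurePreserving_sub_left (volume : Measure (Fin n → ℝ))
      x).quasiMeasurePreserving.ae hae
  have hcont2 : Continuous (fun y : Fin n → ℝ => 2*(E - Ξ (Tproj n (x - y)))) :=
    continuous_const.mul (continuous_const.sub (Ξ.continuous.comp
      ((lipschitz_Tproj n).continuous.comp (continuous_const.sub continuous_id))))
  have hIntL : Integrable (fun y => ρ y * vnsq (G y)) (volume : Measure (Fin n → ℝ)) := by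
    have h := integrable_finset_sum (μ := (volume : Measure (Fin n → ℝ)))
      (Finset.univ : Finset (Fin n)) (fun i _ => hInt2 i)
    apply h.congr
    refine Eventually.of_forall fun y => ?_
    show (∑ i, ρ y * (G y i)^2) = ρ y * vnsq (G y)
    rw [show vnsq (G y) = ∑ i, (G y i)^2 from rfl, Finset.mul_sum]
  have hIntR : Integrable (fun y => ρ y * (2*(E - Ξ (Tproj n (x - y)))))
      (volume : Measure (Fin n → ℝ)) := by
    have hb : ∀ y : Fin n → ℝ, ‖2*(E - Ξ (Tproj n (x - y)))‖ ≤ 2*(|E| + ‖Ξ‖) := by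
      intro y
      have h1 : |Ξ (Tproj n (x - y))| ≤ ‖Ξ‖ := by
        simpa [Real.norm_eq_abs] using Ξ.norm_coe_le_norm (Tproj n (x - y))
      rw [Real.norm_eq_abs, abs_mul, abs_two]
      have h2 : |E - Ξ (Tproj n (x - y))| ≤ |E| + |Ξ (Tproj n (x - y))| := abs_sub _ _
      nlinarith [abs_nonneg (E - Ξ (Tproj n (x - y)))]
    have := hρi.bdd_mul (f := fun y => 2*(E - Ξ (Tproj n (x - y))))
      hcont2.aestronglyMeasurable (Eventually.of_forall hb)
    simpa [mul_comm] using this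
  have hmono1 : ∫ y, ρ y * vnsq (G y) ≤ ∫ y, ρ y * (2*(E - Ξ (Tproj n (x - y)))) := by
    apply integral_mono_ae hIntL hIntR
    filter_upwards [haeT] with y hy
    exact mul_le_mul_of_nonneg_left (by linarith) (hρ0 y)
  have hmono2 : ∫ y, ρ y * (2*(E - Ξ (Tproj n (x - y))))
      ≤ ∫ y, ρ y * (2*(E + ε - Ξ (Tproj n x))) := by
    apply integral_mono hIntR (hρi.mul_const _)
    intro y
    rcases eq_or_lt_of_le (hρ0 y) with h0 | h0
    · simp only [← h0, zero_mul]; exact le_refl _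
    · have hy : y ∈ Function.support ρ := by
        simp only [Function.mem_support]; exact ne_of_gt h0
      rw [hρdef, f.support_normed_eq] at hy
      have hyn : ‖y‖ < f.rOut := by simpa [mem_ball_zero_iff] using hy
      have h2 := abs_le.1 (hUC x y hyn)
      apply mul_le_mul_of_nonneg_left _ (hρ0 y)
      linarith [h2.2]
  have hmono3 : ∫ y, ρ y * (2*(E + ε - Ξ (Tproj n x))) = 2*(E + ε - Ξ (Tproj n x)) := by
    rw [integral_mul_const, hρ1, one_mul]
  have := hsum.trans (hmono1.trans (hmono2.trans_eq hmono3))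
  linarith

end AuxSubsolution2

open Convolution Metric

/-- if a periodic Lipschitz `φ` satisfies
`(1/2)|∇φ+P|² + Ξ ≤ E` a.e., then `Ĥ_Ξ(P) ≤ E`. -/
theorem HXi_le_of_ae_subsolution (n : ℕ) (hn : 1 ≤ n) (Ξ : C(Torus n, ℝ))
    (P : Fin n → ℝ) (E : ℝ) (φ : (Fin n → ℝ) → ℝ) (K : NNReal)
    (hφ : LipschitzWith K φ) (hper : ZPeriodic φ)
    (hae : ∀ᵐ x ∂(volume : Measure (Fin n → ℝ)),
      (1/2) * vnsq (vgrad φ x + P) + Ξ (Tproj n x) ≤ E) :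
    HXi Ξ P ≤ E := by
  classical
  have hprob : IsProbabilityMeasure (volume : Measure (Torus n)) := by
    have : IsProbabilityMeasure (volume : Measure (AddCircle (1:ℝ))) :=
      ⟨by simp [AddCircle.measure_univ]⟩
    infer_instance
  apply csSup_le
  · exact ⟨(∫ y, Ξ y ∂(volume : Measure (Torus n))) + Fdir volume P,
      (volume : Measure (Torus n)), hprob, rfl⟩
  rintro r ⟨μ, hμ, rfl⟩
  refine le_of_forall_pos_le_add fun ε hε => ?_
  obtain ⟨δ, hδ, hUC⟩ := xi_uniform n Ξ hε
  set f : ContDiffBump (0 : Fin n → ℝ) := ⟨δ/2, δ, by linarith, by linarith⟩ with hf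
  have hrOut : f.rOut = δ := rfl
  set ψ := (f.normed volume) ⋆[ContinuousLinearMap.lsmul ℝ ℝ] φ with hψdef
  have hψC1 : ContDiff ℝ 1 ψ := conv_contDiff φ K hφ f
  have hψper : ZPeriodic ψ := conv_periodic φ hper f
  have hstar : ∀ x, (1/2) * vnsq (vgrad ψ x + P) + Ξ (Tproj n x) ≤ E + ε :=
    star_bound Ξ P E φ K hφ hae f ε (fun x y h => hUC x y (hrOut ▸ h))
  have hTrep : ∀ y : Torus n, vnsq (vgrad ψ (Trep n y) + P) ≤ 2*(E + ε) - 2*(Ξ y) := by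
    intro y
    have := hstar (Trep n y)
    rw [Tproj_Trep] at this
    linarith
  have hvnsq_nonneg : ∀ a : Fin n → ℝ, 0 ≤ vnsq a := fun a =>
    Finset.sum_nonneg fun i _ => sq_nonneg _
  -- Fdir bound
  have hbdd : BddBelow {r : ℝ | ∃ φ', IsC1Torus φ' ∧
      r = ∫ y, vnsq (vgrad φ' (Trep n y) + P) ∂μ} := by
    refine ⟨0, ?_⟩
    rintro r ⟨φ', _, rfl⟩
    exact integral_nonneg fun y => hvnsq_nonneg _
  have hmem : (∫ y, vnsq (vgrad ψ (Trep n y) + P) ∂μ) ∈ {r : ℝ | ∃ φ', IsC1Torus φ' ∧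
      r = ∫ y, vnsq (vgrad φ' (Trep n y) + P) ∂μ} := ⟨ψ, ⟨hψC1, hψper⟩, rfl⟩
  have hF : Fdir μ P ≤ (1/2) * ∫ y, vnsq (vgrad ψ (Trep n y) + P) ∂μ := by
    unfold Fdir
    apply mul_le_mul_of_nonneg_left (csInf_le hbdd hmem) (by norm_num)
  have hXint : Integrable (fun y => Ξ y) μ := by
    apply Integrable.mono' (integrable_const ‖Ξ‖) Ξ.continuous.aestronglyMeasurable
    exact Eventually.of_forall fun y => Ξ.norm_coe_le_norm y
  have hLmeas : AEStronglyMeasurable (fun y : Torus n => vnsq (vgrad ψ (Trep n y) + P)) μ := by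
    have hc : Continuous (fun z : Fin n → ℝ => vnsq (vgrad ψ z + P)) := by
      have h1 : Continuous (fderiv ℝ ψ) := hψC1.continuous_fderiv one_ne_zero
      apply continuous_finset_sum
      intro i _
      exact ((h1.clm_apply continuous_const).add continuous_const).pow 2
    exact (hc.measurable.comp (measurable_Trep n)).aestronglyMeasurable
  have hLint : Integrable (fun y : Torus n => vnsq (vgrad ψ (Trep n y) + P)) μ := by
    apply Integrable.mono' (integrable_const (2*(E + ε) + 2*‖Ξ‖)) hLmeas
    refine Eventually.of_forall fun y => ?_
    rw [Real.norm_eq_abs, abs_of_nonneg (hvnsq_nonneg _)]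
    have h1 := hTrep y
    have h2 : |Ξ y| ≤ ‖Ξ‖ := by simpa [Real.norm_eq_abs] using Ξ.norm_coe_le_norm y
    have := abs_le.1 h2
    linarith
  have hIneq : ∫ y, vnsq (vgrad ψ (Trep n y) + P) ∂μ ≤ ∫ y, (2*(E + ε) - 2*Ξ y) ∂μ :=
    integral_mono hLint ((integrable_const _).sub (hXint.const_mul 2)) hTrep
  have hRHS : ∫ y, (2*(E + ε) - 2*Ξ y) ∂μ = 2*(E + ε) - 2*∫ y, Ξ y ∂μ := by
    rw [integral_sub (integrable_const _) (hXint.const_mul 2), integral_const,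
      integral_const_mul]
    simp
  have : Fdir μ P ≤ (1/2) * (2*(E + ε) - 2*∫ y, Ξ y ∂μ) := by
    apply hF.trans
    apply mul_le_mul_of_nonneg_left _ (by norm_num : (0:ℝ) ≤ 1/2)
    rw [← hRHS]; exact hIneq
  linarith

end
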